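/- arXiv:1403.8032 — 3 statements merged into one kernel-verified Lean document; each statement's English description precedes it below -/
import Mathlib

section
/- Let A be an n×n Z-matrix. If A has an eigenvalue with nonpositive real part (in particular if A is not a nonsingular M-matrix with positive-real-part spectrum), then there is no vector x ≥ 0 with A x > 0 componentwise. -/
/-!
If `x ≥ 0` and `A x > 0` for a Z-matrix `A`, then `x > 0`, and conjugating by `diagonal x` turns
`A x > 0` into strict diagonal dominance of the rows: `∑_{j ≠ k} |a_kj| x_j / x_k < a_kk`.
Gershgorin's theorem for `diagonal x⁻¹ * A * diagonal x`, which has the spectrum of `A`, then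
puts every eigenvalue in a disc `|μ - a_kk| < a_kk`, hence in the open right half-plane.
-/

open Finset Matrix

variable {ι : Type*} [Fintype ι]

theorem Matrix.pos_of_mulVec_pos_of_offDiag_nonpos {R : Type*} [Ring R] [LinearOrder R]
    [IsStrictOrderedRing R] {A : Matrix ι ι R} (hA : ∀ p q, p ≠ q → A p q ≤ 0) {x : ι → R}
    (hx : ∀ i, 0 ≤ x i) (hAx : ∀ i, 0 < (A *ᵥ x) i) (i : ι) : 0 < x i := by
  refine (hx i).lt_of_ne fun hxi => (hAx i).not_ge ?_
  refine Finset.sum_nonpos fun j _ => ?_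
  rcases eq_or_ne j i with rfl | hji
  · simp [← hxi]
  · exact mul_nonpos_of_nonpos_of_nonneg (hA i j hji.symm) (hx j)

variable [DecidableEq ι]

theorem Matrix.spectrum_diagonal_inv_mul_mul_diagonal {K : Type*} [Field K] (A : Matrix ι ι K)
    {w : ι → K} (hw : ∀ i, w i ≠ 0) :
    spectrum K (diagonal w⁻¹ * A * diagonal w) = spectrum K A :=
  spectrum.units_conjugate' (u := ⟨diagonal w, diagonal w⁻¹, by simp [hw], by simp [hw]⟩)

theorem Matrix.exists_mem_weighted_gershgorin_ball {K : Type*} [NormedField K]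
    {A : Matrix ι ι K} {w : ι → K} (hw : ∀ i, w i ≠ 0) {μ : K} (hμ : μ ∈ spectrum K A) :
    ∃ k, μ ∈ Metric.closedBall (A k k) (∑ j ∈ univ.erase k, ‖A k j‖ * ‖w j‖ / ‖w k‖) := by
  rw [← spectrum_diagonal_inv_mul_mul_diagonal A hw, ← spectrum_toLin',
    ← Module.End.hasEigenvalue_iff_mem_spectrum] at hμ
  obtain ⟨k, hk⟩ := eigenvalue_mem_ball hμ
  refine ⟨k, ?_⟩
  simpa [diagonal_mul, mul_diagonal, norm_mul, norm_inv, mul_inv_cancel₀ (hw k), mul_comm,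
    mul_left_comm, div_eq_mul_inv] using hk

theorem Matrix.re_pos_of_mem_spectrum_of_mulVec_pos {A : Matrix ι ι ℝ}
    (hA : ∀ p q, p ≠ q → A p q ≤ 0) {x : ι → ℝ} (hx : ∀ i, 0 < x i)
    (hAx : ∀ i, 0 < (A *ᵥ x) i) {μ : ℂ}
    (hμ : μ ∈ spectrum ℂ (A.map Complex.ofReal)) : 0 < μ.re := by
  obtain ⟨k, hk⟩ := exists_mem_weighted_gershgorin_ball
    (w := fun i => (x i : ℂ)) (fun i => Complex.ofReal_ne_zero.mpr (hx i).ne') hμ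
  have hradius : ∑ j ∈ univ.erase k, ‖(A k j : ℂ)‖ * ‖(x j : ℂ)‖ / ‖(x k : ℂ)‖ < A k k := by
    have hrow : ∑ j ∈ univ.erase k, -A k j * x j < A k k * x k := by
      have := hAx k
      rw [mulVec, dotProduct, ← add_sum_erase _ _ (mem_univ k)] at this
      simp only [neg_mul, sum_neg_distrib]
      linarith
    calc ∑ j ∈ univ.erase k, ‖(A k j : ℂ)‖ * ‖(x j : ℂ)‖ / ‖(x k : ℂ)‖
        = (∑ j ∈ univ.erase k, -A k j * x j) / x k := by
          rw [sum_div]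
          refine sum_congr rfl fun j hj => ?_
          simp only [Complex.norm_real, Real.norm_eq_abs, abs_of_pos (hx _),
            abs_of_nonpos (hA k j (ne_of_mem_erase hj).symm)]
      _ < A k k := by rwa [div_lt_iff₀ (hx k)]
  have hre : A k k - ‖μ - A k k‖ ≤ μ.re := by
    have := Complex.re_le_norm (A k k - μ)
    rw [← norm_neg, neg_sub, Complex.sub_re, Complex.ofReal_re] at this
    linarith
  rw [Metric.mem_closedBall, dist_eq_norm] at hk
  simp only [map_apply] at hk
  linarith

theorem stmt_5 {n : ℕ} (A : Matrix (Fin n) (Fin n) ℝ)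
    (hA : ∀ p q, p ≠ q → A p q ≤ 0)
    (hnp : ∃ μ ∈ spectrum ℂ (A.map Complex.ofReal), μ.re ≤ 0) :
    ¬ ∃ x : Fin n → ℝ, (∀ i, 0 ≤ x i) ∧ (∀ i, 0 < A.mulVec x i) := by
  rintro ⟨x, hx, hAx⟩
  obtain ⟨μ, hμ, hre⟩ := hnp
  have hxpos := pos_of_mulVec_pos_of_offDiag_nonpos hA hx hAx
  exact hre.not_gt (re_pos_of_mem_spectrum_of_mulVec_pos hA hxpos hAx hμ)
end

section
/- Let F ≥ 0 and let V be a nonsingular M-matrix with V⁻¹ ≥ 0, and suppose V − F is irreducible. If ρ(F V⁻¹) < 1 and u ≥ 0 with u ≠ 0, then the unique solution of (V − F) v = u is strictly positive; if ρ(F V⁻¹) > 1 and u ≥ 0 with u ≠ 0, then any solution v of (V − F) v = u has a strictly negative component. -/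
/-!
Put `N = V⁻¹ F ≥ 0`. The equation gives `v - N v = V⁻¹ u ≥ 0`, and `F V⁻¹`, `V⁻¹ F` have the same
characteristic polynomial, hence the same spectrum.

If `ρ(N) < 1`, Gelfand's formula gives `Nᵏ → 0`, and the negative part `z` of `v` satisfies
`z ≤ N z`, hence `z ≤ Nᵏ z → 0`; so `v ≥ 0`. A nonnegative `v` is positive: in a row `p` with
`v p = 0`, the sum `∑ q, (V - F) p q * v q = u p ≥ 0` has only nonpositive terms, so
`(V - F) p q = 0` whenever `v q ≠ 0`, contradicting irreducibility.

If `ρ(N) > 1`, a positive `v` with `N v ≤ v` is impossible: at an eigenvector `x`, the index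
maximising `‖x i‖ / v i` shows that every eigenvalue of `N` has modulus at most `1`.
-/

def Matrix.IsReducibleMat {n : ℕ} (A : Matrix (Fin n) (Fin n) ℝ) : Prop :=
  ∃ I J : Set (Fin n), I.Nonempty ∧ J.Nonempty ∧ Disjoint I J ∧ I ∪ J = Set.univ ∧
    ∀ p ∈ I, ∀ q ∈ J, A p q = 0

open Filter Topology Matrix

theorem tendsto_pow_atTop_nhds_zero_of_spectralRadius_lt_one {A : Type*} [NormedRing A]
    [NormedAlgebra ℂ A] [CompleteSpace A] {a : A} (ha : spectralRadius ℂ a < 1) :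
    Tendsto (a ^ ·) atTop (𝓝 0) := by
  obtain ⟨r, hρr, hr1⟩ := ENNReal.lt_iff_exists_nnreal_btwn.mp ha
  have hr1 : (r : ℝ) < 1 := by exact_mod_cast hr1
  have hgelfand := spectrum.pow_nnnorm_pow_one_div_tendsto_nhds_spectralRadius a
  have hbound : ∀ᶠ k : ℕ in atTop, ‖a ^ k‖ ≤ (r : ℝ) ^ k := by
    filter_upwards [hgelfand.eventually_lt_const hρr, eventually_ne_atTop 0] with k hk hk0
    have := ENNReal.rpow_lt_rpow hk (by positivity : (0 : ℝ) < k)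
    rw [← ENNReal.rpow_mul, one_div_mul_cancel (by exact_mod_cast hk0), ENNReal.rpow_one,
      ENNReal.rpow_natCast] at this
    exact_mod_cast this.le
  exact squeeze_zero_norm' hbound (tendsto_pow_atTop_nhds_zero_of_lt_one r.coe_nonneg hr1)

namespace Matrix

variable {ι : Type*} [Fintype ι]

theorem mulVec_mono_of_nonneg {N : Matrix ι ι ℝ} (hN : ∀ i j, 0 ≤ N i j) {x y : ι → ℝ}
    (hxy : x ≤ y) : N *ᵥ x ≤ N *ᵥ y := fun i =>
  Finset.sum_le_sum fun j _ => mul_le_mul_of_nonneg_left (hxy j) (hN i j)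

theorem map_ofReal_mul (A B : Matrix ι ι ℝ) :
    (A * B).map Complex.ofReal = A.map Complex.ofReal * B.map Complex.ofReal :=
  Matrix.map_mul (f := Complex.ofRealHom)

variable [DecidableEq ι]

theorem spectrum_mul_comm {K : Type*} [Field K] (A B : Matrix ι ι K) :
    spectrum K (A * B) = spectrum K (B * A) := by
  ext μ
  simp only [mem_spectrum_iff_isRoot_charpoly, charpoly_mul_comm]

theorem tendsto_pow_atTop_nhds_zero_of_forall_norm_lt_one {A : Matrix ι ι ℂ}
    (hA : ∀ μ ∈ spectrum ℂ A, ‖μ‖ < 1) : Tendsto (A ^ ·) atTop (𝓝 0) := by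
  rcases subsingleton_or_nontrivial (Matrix ι ι ℂ) with _ | _
  · simp [Subsingleton.elim _ (0 : Matrix ι ι ℂ)]
  let _ := Matrix.linftyOpNormedRing (n := ι) (α := ℂ)
  let _ := Matrix.linftyOpNormedAlgebra (n := ι) (R := ℂ) (α := ℂ)
  refine tendsto_pow_atTop_nhds_zero_of_spectralRadius_lt_one ?_
  exact_mod_cast spectrum.spectralRadius_lt_of_forall_lt A fun μ hμ => by
    exact_mod_cast hA μ hμ

theorem map_ofReal_pow (N : Matrix ι ι ℝ) (k : ℕ) :
    (N ^ k).map Complex.ofReal = N.map Complex.ofReal ^ k :=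
  map_pow Complex.ofRealHom.mapMatrix N k

theorem tendsto_pow_atTop_nhds_zero_of_forall_mem_spectrum_map_ofReal {N : Matrix ι ι ℝ}
    (hN : ∀ μ ∈ spectrum ℂ (N.map Complex.ofReal), ‖μ‖ < 1) : Tendsto (N ^ ·) atTop (𝓝 0) := by
  have hC := (continuous_id.matrix_map Complex.continuous_re).tendsto 0 |>.comp
    (tendsto_pow_atTop_nhds_zero_of_forall_norm_lt_one hN)
  convert hC using 1
  · ext k i j
    simp [← map_ofReal_pow]
  · simp

theorem le_pow_mulVec_of_le_mulVec {N : Matrix ι ι ℝ} (hN : ∀ i j, 0 ≤ N i j) {z : ι → ℝ}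
    (hz : z ≤ N *ᵥ z) (k : ℕ) : z ≤ (N ^ k) *ᵥ z := by
  induction k with
  | zero => simp
  | succ k ih =>
    calc z ≤ N *ᵥ z := hz
      _ ≤ N *ᵥ ((N ^ k) *ᵥ z) := mulVec_mono_of_nonneg hN ih
      _ = (N ^ (k + 1)) *ᵥ z := by rw [mulVec_mulVec, pow_succ']

theorem nonpos_of_le_mulVec_of_tendsto_pow {N : Matrix ι ι ℝ} (hN : ∀ i j, 0 ≤ N i j)
    (hlim : Tendsto (N ^ ·) atTop (𝓝 0)) {z : ι → ℝ} (hz : z ≤ N *ᵥ z) : z ≤ 0 := by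
  have : Tendsto (fun k => (N ^ k) *ᵥ z) atTop (𝓝 0) := by
    simpa [Function.comp_def] using
      ((continuous_id.matrix_mulVec continuous_const).tendsto 0).comp hlim
  exact ge_of_tendsto' this (le_pow_mulVec_of_le_mulVec hN hz)

theorem nonneg_of_mulVec_le_self {N : Matrix ι ι ℝ} (hN : ∀ i j, 0 ≤ N i j)
    (hlim : Tendsto (N ^ ·) atTop (𝓝 0)) {v : ι → ℝ} (hv : N *ᵥ v ≤ v) : 0 ≤ v := by
  set z : ι → ℝ := fun i => max (-v i) 0
  have hz_nonneg : 0 ≤ z := fun i => le_max_right _ _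
  have hvz : -v ≤ z := fun i => le_max_left _ _
  have hz : z ≤ N *ᵥ z := by
    intro i
    have hneg := mulVec_mono_of_nonneg hN hvz i
    rw [mulVec_neg, Pi.neg_apply] at hneg
    exact max_le (by linarith [hv i]) (by simpa using mulVec_mono_of_nonneg hN hz_nonneg i)
  exact neg_nonpos.mp (hvz.trans (nonpos_of_le_mulVec_of_tendsto_pow hN hlim hz))

theorem norm_le_of_mem_spectrum_of_mulVec_le {N : Matrix ι ι ℝ} (hN : ∀ i j, 0 ≤ N i j)
    {v : ι → ℝ} (hv : ∀ i, 0 < v i) {c : ℝ} (hNv : N *ᵥ v ≤ c • v) {μ : ℂ}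
    (hμ : μ ∈ spectrum ℂ (N.map Complex.ofReal)) : ‖μ‖ ≤ c := by
  rw [← spectrum_toLin', ← Module.End.hasEigenvalue_iff_mem_spectrum] at hμ
  obtain ⟨x, hx⟩ := hμ.exists_hasEigenvector
  have hxμ : N.map Complex.ofReal *ᵥ x = μ • x := by simpa using hx.apply_eq_smul
  obtain ⟨j, hj⟩ := Function.ne_iff.mp hx.2
  obtain ⟨i, -, hmax⟩ := Finset.univ.exists_max_image (fun i => ‖x i‖ / v i) ⟨j, Finset.mem_univ j⟩
  set t := ‖x i‖ / v i
  have hxt : ∀ j, ‖x j‖ ≤ t * v j := fun j =>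
    (div_le_iff₀ (hv j)).mp (hmax j (Finset.mem_univ j))
  have hxi : ‖x i‖ = t * v i := (div_mul_cancel₀ _ (hv i).ne').symm
  have ht : 0 < t := (mul_pos_iff_of_pos_right (hv j)).mp ((norm_pos_iff.mpr hj).trans_le (hxt j))
  have key : ‖μ‖ * (t * v i) ≤ c * (t * v i) := by
    calc ‖μ‖ * (t * v i) = ‖(N.map Complex.ofReal *ᵥ x) i‖ := by
          rw [hxμ, Pi.smul_apply, smul_eq_mul, norm_mul, hxi]
      _ ≤ ∑ j, N i j * ‖x j‖ := by
          refine (norm_sum_le _ _).trans_eq (Finset.sum_congr rfl fun j _ => ?_)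
          simp only [norm_mul, map_apply, Complex.norm_real, Real.norm_of_nonneg (hN i j)]
      _ ≤ ∑ j, N i j * (t * v j) :=
          Finset.sum_le_sum fun j _ => mul_le_mul_of_nonneg_left (hxt j) (hN i j)
      _ = t * (N *ᵥ v) i := by
          simp only [mulVec, dotProduct, Finset.mul_sum]
          exact Finset.sum_congr rfl fun j _ => by ring
      _ ≤ t * (c * v i) := mul_le_mul_of_nonneg_left (hNv i) ht.le
      _ = c * (t * v i) := by ring
  exact le_of_mul_le_mul_right key (mul_pos ht (hv i))

theorem pos_of_mulVec_nonneg_of_not_isReducibleMat {n : ℕ} {A : Matrix (Fin n) (Fin n) ℝ}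
    (hA : ∀ p q, p ≠ q → A p q ≤ 0) (hirr : ¬ A.IsReducibleMat) {v : Fin n → ℝ} (hv : 0 ≤ v)
    (hv0 : v ≠ 0) (hAv : 0 ≤ A *ᵥ v) (i : Fin n) : 0 < v i := by
  refine (hv i).lt_of_ne' fun hvi => hirr ?_
  obtain ⟨j, hj⟩ := Function.ne_iff.mp hv0
  refine ⟨{p | v p = 0}, {q | v q ≠ 0}, ⟨i, hvi⟩, ⟨j, hj⟩,
    Set.disjoint_left.mpr fun p hp hp' => hp' hp, Set.union_compl_self _, fun p hp q hq => ?_⟩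
  have hterm : ∀ k ∈ Finset.univ, A p k * v k ≤ 0 := fun k _ => by
    rcases eq_or_ne p k with rfl | hpk
    · simp [show v p = 0 from hp]
    · exact mul_nonpos_of_nonpos_of_nonneg (hA p k hpk) (hv k)
  have hrow : ∑ k, A p k * v k = 0 := (Finset.sum_nonpos hterm).antisymm (hAv p)
  have := (Finset.sum_eq_zero_iff_of_nonpos hterm).mp hrow q (Finset.mem_univ q)
  exact (mul_eq_zero.mp this).resolve_right hq

end Matrix

theorem stmt_13 {n : ℕ} (F V : Matrix (Fin n) (Fin n) ℝ)
    (hF : ∀ i j, 0 ≤ F i j)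
    (hVZ : ∀ p q, p ≠ q → V p q ≤ 0)
    (hVunit : IsUnit V.det)
    (hVinv : ∀ i j, 0 ≤ V⁻¹ i j)
    (hirr : ¬ (V - F).IsReducibleMat)
    (u v : Fin n → ℝ) (hu : ∀ i, 0 ≤ u i) (hune : u ≠ 0)
    (hv : (V - F).mulVec v = u) :
    ((∀ μ ∈ spectrum ℂ ((F * V⁻¹).map Complex.ofReal), ‖μ‖ < 1) → ∀ i, 0 < v i) ∧
    ((∃ μ ∈ spectrum ℂ ((F * V⁻¹).map Complex.ofReal), 1 < ‖μ‖) → ∃ i, v i < 0) := by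
  have hN : ∀ i j, 0 ≤ (V⁻¹ * F) i j := fun i j => by
    rw [mul_apply]
    exact Finset.sum_nonneg fun k _ => mul_nonneg (hVinv i k) (hF k j)
  have hNv : (V⁻¹ * F) *ᵥ v ≤ v := by
    have hsplit : v - (V⁻¹ * F) *ᵥ v = V⁻¹ *ᵥ u := by
      rw [← hv, mulVec_mulVec, Matrix.mul_sub, nonsing_inv_mul _ hVunit, sub_mulVec, one_mulVec]
    have : 0 ≤ V⁻¹ *ᵥ u := by simpa using mulVec_mono_of_nonneg hVinv (show 0 ≤ u from hu)
    exact sub_nonneg.mp (hsplit ▸ this)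
  have hspec : spectrum ℂ ((F * V⁻¹).map Complex.ofReal) =
      spectrum ℂ ((V⁻¹ * F).map Complex.ofReal) := by
    rw [map_ofReal_mul, map_ofReal_mul, spectrum_mul_comm]
  have hZ : ∀ p q, p ≠ q → (V - F) p q ≤ 0 := fun p q hpq => by
    simpa using (hVZ p q hpq).trans (hF p q)
  have hv0 : v ≠ 0 := by
    rintro rfl
    exact hune (by simpa using hv.symm)
  have hpos : 0 ≤ v → ∀ i, 0 < v i := fun hv_nonneg =>
    pos_of_mulVec_nonneg_of_not_isReducibleMat hZ hirr hv_nonneg hv0 (hv ▸ hu)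
  constructor
  · intro hρ
    have hlim := tendsto_pow_atTop_nhds_zero_of_forall_mem_spectrum_map_ofReal (hspec ▸ hρ)
    exact hpos (nonneg_of_mulVec_le_self hN hlim hNv)
  · rintro ⟨μ, hμ, hμ1⟩
    by_contra! hv_nonneg
    have hμ_le : ‖μ‖ ≤ 1 := norm_le_of_mem_spectrum_of_mulVec_le hN (hpos hv_nonneg)
      (by simpa using hNv) (hspec ▸ hμ)
    linarith
end

section
/- Let F ≥ 0 and V be a nonsingular M-matrix with V⁻¹ ≥ 0, with V − F irreducible. If ρ(F V⁻¹) > 1, then every solution v of (V − F) v = 0 is either v = 0 or has a strictly negative component; i.e., there is no solution v ≥ 0, v ≠ 0. -/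
open Finset Matrix

namespace Matrix

theorem pos_of_mulVec_eq_zero_of_not_isReducibleMat {n : ℕ} {A : Matrix (Fin n) (Fin n) ℝ}
    (hA : ∀ p q, p ≠ q → A p q ≤ 0) (hirr : ¬ A.IsReducibleMat) {v : Fin n → ℝ}
    (hAv : A *ᵥ v = 0) (hv : ∀ i, 0 ≤ v i) (hv0 : v ≠ 0) (i : Fin n) : 0 < v i := by
  refine (hv i).lt_of_ne' fun hi => hirr ?_
  refine ⟨{p | v p = 0}, {q | v q ≠ 0}, ⟨i, hi⟩, Function.ne_iff.mp hv0,
    Set.disjoint_left.mpr fun _ h h' => h' h, by ext; simp [em], fun p hp q hq => ?_⟩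
  -- Row `p` of `A v = 0` is a sum of nonpositive terms, since `v p = 0` kills the diagonal one.
  have hterm : ∀ j ∈ univ, A p j * v j ≤ 0 := fun j _ => by
    rcases eq_or_ne p j with rfl | hpj
    · simp [show v p = 0 from hp]
    · exact mul_nonpos_of_nonpos_of_nonneg (hA p j hpj) (hv j)
  have hrow : ∑ j, A p j * v j = 0 := congrFun hAv p
  exact (mul_eq_zero.mp ((sum_eq_zero_iff_of_nonpos hterm).mp hrow q (mem_univ q))).resolve_right hq

variable {ι : Type*} [Fintype ι]

theorem exists_mulVec_eq_smul_of_mem_spectrum {K : Type*} [Field K] [DecidableEq ι]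
    {A : Matrix ι ι K} {μ : K} (hμ : μ ∈ spectrum K A) : ∃ u ≠ 0, A *ᵥ u = μ • u := by
  rw [← spectrum_toLin', ← Module.End.hasEigenvalue_iff_mem_spectrum] at hμ
  obtain ⟨u, hu⟩ := hμ.exists_hasEigenvector
  exact ⟨u, hu.2, by simpa using hu.apply_eq_smul⟩

theorem norm_le_of_map_ofReal_mulVec_eq_smul {M : Matrix ι ι ℝ} (hM : ∀ i j, 0 ≤ M i j)
    {v : ι → ℝ} (hv : ∀ i, 0 < v i) {r : ℝ} (hMv : M *ᵥ v ≤ r • v)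
    {μ : ℂ} {u : ι → ℂ} (hu : M.map Complex.ofReal *ᵥ u = μ • u) (hu0 : u ≠ 0) : ‖μ‖ ≤ r := by
  obtain ⟨j, hj⟩ := Function.ne_iff.mp hu0
  obtain ⟨i, -, hi⟩ := exists_max_image univ (fun i => ‖u i‖ / v i) ⟨j, mem_univ j⟩
  set c := ‖u i‖ / v i
  have hbound : ∀ k, ‖u k‖ ≤ c * v k := fun k => (div_le_iff₀ (hv k)).mp (hi k (mem_univ k))
  have hc : 0 < c := (div_pos (norm_pos_iff.mpr hj) (hv j)).trans_le (hi j (mem_univ j))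
  have key : ‖μ‖ * (c * v i) ≤ r * (c * v i) := calc
    ‖μ‖ * (c * v i) = ‖(M.map Complex.ofReal *ᵥ u) i‖ := by
      rw [hu, Pi.smul_apply, smul_eq_mul, norm_mul, div_mul_cancel₀ _ (hv i).ne']
    _ ≤ ∑ k, M i k * ‖u k‖ := by
      refine (norm_sum_le _ _).trans_eq (sum_congr rfl fun k _ => ?_)
      change ‖(M i k : ℂ) * u k‖ = _
      rw [norm_mul, Complex.norm_real, Real.norm_of_nonneg (hM i k)]
    _ ≤ ∑ k, M i k * (c * v k) :=
      sum_le_sum fun k _ => mul_le_mul_of_nonneg_left (hbound k) (hM i k)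
    _ = c * (M *ᵥ v) i := by
      simp only [mulVec, dotProduct, mul_sum]
      exact sum_congr rfl fun k _ => by ring
    _ ≤ c * (r * v i) := mul_le_mul_of_nonneg_left (hMv i) hc.le
    _ = r * (c * v i) := by ring
  exact le_of_mul_le_mul_right key (mul_pos hc (hv i))

theorem norm_le_of_mem_spectrum_map_ofReal [DecidableEq ι] {M : Matrix ι ι ℝ}
    (hM : ∀ i j, 0 ≤ M i j) {v : ι → ℝ} (hv : ∀ i, 0 < v i) {r : ℝ} (hMv : M *ᵥ v ≤ r • v)
    {μ : ℂ} (hμ : μ ∈ spectrum ℂ (M.map Complex.ofReal)) : ‖μ‖ ≤ r :=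
  let ⟨_, hu0, hu⟩ := exists_mulVec_eq_smul_of_mem_spectrum hμ
  norm_le_of_map_ofReal_mulVec_eq_smul hM hv hMv hu hu0

theorem mem_spectrum_map_ofReal_mul_comm [DecidableEq ι] {A B : Matrix ι ι ℝ} {μ : ℂ}
    (hμ : μ ∈ spectrum ℂ ((A * B).map Complex.ofReal)) (hμ0 : μ ≠ 0) :
    μ ∈ spectrum ℂ ((B * A).map Complex.ofReal) := by
  have h := spectrum.nonzero_mul_comm (𝕜 := ℂ) (A.map Complex.ofRealHom) (B.map Complex.ofRealHom)
  simp only [← Matrix.map_mul] at h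
  exact (h.subset ⟨hμ, hμ0⟩).1

end Matrix

theorem stmt_14 {n : ℕ} (F V : Matrix (Fin n) (Fin n) ℝ)
    (hF : ∀ i j, 0 ≤ F i j)
    (hVZ : ∀ p q, p ≠ q → V p q ≤ 0)
    (hVunit : IsUnit V.det)
    (hVinv : ∀ i j, 0 ≤ V⁻¹ i j)
    (hirr : ¬ (V - F).IsReducibleMat)
    (hrho : ∃ μ ∈ spectrum ℂ ((F * V⁻¹).map Complex.ofReal), 1 < ‖μ‖) :
    ∀ v : Fin n → ℝ, (V - F).mulVec v = 0 → v = 0 ∨ ∃ i, v i < 0 := by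
  intro v hv
  by_contra! ⟨hv0, hvnn⟩
  have hZ : ∀ p q, p ≠ q → (V - F) p q ≤ 0 := fun p q hpq =>
    sub_nonpos.mpr ((hVZ p q hpq).trans (hF p q))
  have hpos := pos_of_mulVec_eq_zero_of_not_isReducibleMat hZ hirr hv hvnn hv0
  have hfix : (V⁻¹ * F) *ᵥ v = v := by
    rw [← mulVec_mulVec, ← sub_eq_zero.mp ((sub_mulVec V F v).symm.trans hv), mulVec_mulVec,
      nonsing_inv_mul V hVunit, one_mulVec]
  have hnonneg : ∀ i j, 0 ≤ (V⁻¹ * F) i j := fun i j => by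
    rw [mul_apply]
    exact sum_nonneg fun k _ => mul_nonneg (hVinv i k) (hF k j)
  obtain ⟨μ, hμ, hμ1⟩ := hrho
  have hμ0 : μ ≠ 0 := norm_pos_iff.mp (one_pos.trans hμ1)
  exact (norm_le_of_mem_spectrum_map_ofReal hnonneg hpos (r := 1) (by rw [hfix, one_smul])
    (mem_spectrum_map_ofReal_mul_comm hμ hμ0)).not_gt hμ1
end
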